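/- arXiv:2008.08996 — 2 statements merged into one kernel-verified Lean document; each statement's English description precedes it below -/
import Mathlib

section
/- Let H be a full hypergraph on W (⋃H = W), let X, Y be exact hitting sets of H, let a ∈ X, b ∈ W with Y = (X \ {a}) ∪ {b} and b ∉ X \ {a}. Then a and b lie in exactly the same hyperedges of H, i.e., a ∼ b. -/
/-- If two exact hitting sets of a full hypergraph differ by exchanging a for b,
then a and b lie in exactly the same hyperedges. -/
theorem exchange_in_exact_hitting_sets_gives_equiv {α : Type*} [DecidableEq α]
    (W : Finset α) (H : Finset (Finset α))
    (hedge : ∀ E ∈ H, E ⊆ W) (hfull : ∀ a ∈ W, ∃ E ∈ H, a ∈ E)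
    (X Y : Finset α) (hXW : X ⊆ W)
    (hX : ∀ E ∈ H, (X ∩ E).card = 1) (hY : ∀ E ∈ H, (Y ∩ E).card = 1)
    (a b : α) (ha : a ∈ X) (hbW : b ∈ W) (hb : b ∉ X.erase a)
    (hXY : Y = insert b (X.erase a)) :
    ∀ E ∈ H, a ∈ E ↔ b ∈ E := by
  intro E hE
  have hXE := hX E hE
  have hYE := hY E hE
  constructor
  · intro haE
    by_contra hbE
    -- X ∩ E = {a}
    have hsingX : X ∩ E = {a} := by
      apply Finset.eq_singleton_iff_unique_mem.mpr
      refine ⟨Finset.mem_inter.mpr ⟨ha, haE⟩, ?_⟩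
      intro x hx
      obtain ⟨y, hy⟩ := Finset.card_eq_one.mp hXE
      have h1 : x = y := by simpa [hy] using hx
      have h2 : a = y := by
        have : a ∈ X ∩ E := Finset.mem_inter.mpr ⟨ha, haE⟩
        simpa [hy] using this
      rw [h1, h2]
    have : Y ∩ E = ∅ := by
      ext x
      simp only [Finset.mem_inter, Finset.notMem_empty, iff_false, hXY,
        Finset.mem_insert, Finset.mem_erase]
      rintro ⟨hx1 | ⟨hxa, hxX⟩, hxE⟩
      · exact hbE (hx1 ▸ hxE)
      · have : x ∈ X ∩ E := Finset.mem_inter.mpr ⟨hxX, hxE⟩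
        rw [hsingX] at this
        exact hxa (Finset.mem_singleton.mp this)
    rw [this] at hYE
    simp at hYE
  · intro hbE
    by_contra haE
    obtain ⟨x, hx⟩ := Finset.card_eq_one.mp hXE
    have hxmem : x ∈ X ∩ E := by simp [hx]
    obtain ⟨hxX, hxE⟩ := Finset.mem_inter.mp hxmem
    have hxa : x ≠ a := fun h => haE (h ▸ hxE)
    have hxerase : x ∈ X.erase a := Finset.mem_erase.mpr ⟨hxa, hxX⟩
    have hxb : x ≠ b := fun h => hb (h ▸ hxerase)
    have hxY : x ∈ Y ∩ E := by
      rw [hXY]; exact Finset.mem_inter.mpr ⟨Finset.mem_insert_of_mem hxerase, hxE⟩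
    have hbY : b ∈ Y ∩ E := by
      rw [hXY]; exact Finset.mem_inter.mpr ⟨Finset.mem_insert_self _ _, hbE⟩
    obtain ⟨y, hy⟩ := Finset.card_eq_one.mp hYE
    have : x = b := by
      have h1 : x = y := by simpa [hy] using hxY
      have h2 : b = y := by simpa [hy] using hbY
      rw [h1, h2]
    exact hxb this
end

section
/- Let H be a full hypergraph on W. Then every minimal hitting set of H is a maximal element of the ideal MC(H) = {S ⊆ W : ∀ b ∈ S, ∃ E ∈ H with S ∩ E = {b}}, i.e., it is an MC-set and no proper superset of it is an MC-set. -/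
namespace Finset

variable {α : Type*} [DecidableEq α]

def IsHittingSet (H : Finset (Finset α)) (X : Finset α) : Prop :=
  ∀ E ∈ H, (X ∩ E).Nonempty

def IsMCSet (H : Finset (Finset α)) (S : Finset α) : Prop :=
  ∀ b ∈ S, ∃ E ∈ H, S ∩ E = {b}

variable {H : Finset (Finset α)} {X S E : Finset α} {a b : α}

theorem IsHittingSet.exists_inter_eq_singleton (hX : IsHittingSet H X)
    (hb : ¬ IsHittingSet H (X.erase b)) :
    ∃ E ∈ H, X ∩ E = {b} := by
  obtain ⟨E, hE, hmiss⟩ : ∃ E ∈ H, X.erase b ∩ E = ∅ := by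
    simpa [IsHittingSet, Finset.not_nonempty_iff_eq_empty] using hb
  rw [erase_inter, erase_eq_empty_iff] at hmiss
  exact ⟨E, hE, hmiss.resolve_left (hX E hE).ne_empty⟩

theorem IsHittingSet.isMCSet_of_minimal (hX : IsHittingSet H X)
    (hmin : ∀ Y ⊂ X, ¬ IsHittingSet H Y) :
    IsMCSet H X :=
  fun _ hb ↦ hX.exists_inter_eq_singleton (hmin _ (erase_ssubset hb))

theorem IsHittingSet.mem_of_inter_eq_singleton (hX : IsHittingSet H X) (hXS : X ⊆ S)
    (hE : E ∈ H) (hSE : S ∩ E = {a}) : a ∈ X := by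
  obtain ⟨x, hx⟩ := hX E hE
  have hxa : x ∈ S ∩ E := inter_subset_inter_right hXS hx
  rw [hSE, mem_singleton] at hxa
  exact hxa ▸ (mem_inter.1 hx).1

theorem IsHittingSet.not_isMCSet_of_ssubset (hX : IsHittingSet H X) (hXS : X ⊂ S) :
    ¬ IsMCSet H S := by
  intro hS
  obtain ⟨a, haS, haX⟩ := exists_of_ssubset hXS
  obtain ⟨E, hE, hSE⟩ := hS a haS
  exact haX (hX.mem_of_inter_eq_singleton hXS.subset hE hSE)

end Finset

theorem minimal_hitting_is_maximal_MC_general {α : Type*} [DecidableEq α]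
    (H : Finset (Finset α))
    (X : Finset α)
    (hhit : ∀ E ∈ H, (X ∩ E).Nonempty)
    (hmin : ∀ Y ⊂ X, ¬ (∀ E ∈ H, (Y ∩ E).Nonempty)) :
    (∀ b ∈ X, ∃ E ∈ H, X ∩ E = {b}) ∧
      ∀ S : Finset α, X ⊂ S → ¬ (∀ b ∈ S, ∃ E ∈ H, S ∩ E = {b}) :=
  have hX : Finset.IsHittingSet H X := hhit
  ⟨hX.isMCSet_of_minimal hmin, fun _ hXS ↦ hX.not_isMCSet_of_ssubset hXS⟩

/-- Every minimal hitting set of a full hypergraph is a maximal MC-set. -/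
theorem minimal_hitting_is_maximal_MC {α : Type*} [DecidableEq α]
    (W : Finset α) (H : Finset (Finset α))
    (hedge : ∀ E ∈ H, E ⊆ W) (hfull : ∀ a ∈ W, ∃ E ∈ H, a ∈ E)
    (X : Finset α) (hXW : X ⊆ W)
    (hhit : ∀ E ∈ H, (X ∩ E).Nonempty)
    (hmin : ∀ Y ⊂ X, ¬ (∀ E ∈ H, (Y ∩ E).Nonempty)) :
    (∀ b ∈ X, ∃ E ∈ H, X ∩ E = {b}) ∧
      ∀ S : Finset α, X ⊂ S → ¬ (∀ b ∈ S, ∃ E ∈ H, S ∩ E = {b}) :=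
  minimal_hitting_is_maximal_MC_general H X hhit hmin
end
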